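/- arXiv:2410.00197 — 4 statements merged into one kernel-verified Lean document; each statement's English description precedes it below -/
import Mathlib

section
/- Let h_1, …, h_n be d×d complex matrices that are Hermitian, pairwise commuting, and satisfy h_j² = 1 for all j, and set H = Σ_{j=1}^n h_j. Let ρ be a d×d positive semidefinite Hermitian matrix with Tr[ρ] = 1, let E_1, …, E_r be d×d complex matrices with Σ_k E_k† E_k = 1, and let O be a d×d Hermitian matrix with operator norm ‖O‖ ≤ 1. Define the response function R(θ) = Σ_{k=1}^r Tr[E_k · exp(−iθH) · ρ · exp(iθH) · E_k† · O]. Then R is differentiable and |R′(θ)| ≤ 2n for every θ ∈ ℝ. -/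
/-!
Moving the channel onto the observable, `R θ = Tr[ρ V M V†]` with `V = exp(iθH)` unitary and
`M = Σ_k E_k† O E_k`, so `R′ θ = Tr[ρ V (iH M - M iH) V†]`. A density matrix satisfies
`|Tr[ρ X]| ≤ ‖X‖` (diagonalize `ρ`), each Hermitian involution `h_j` is unitary so `‖H‖ ≤ n`, and
`‖M‖ ≤ ‖O‖ ≤ 1` by Cauchy–Schwarz over `k` together with `Σ_k ‖E_k x‖² = ‖x‖²`.
Hence `|R′ θ| ≤ 2‖H‖‖M‖ ≤ 2n`.
-/

open Matrix
open scoped Matrix.Norms.L2Operator ComplexOrder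

namespace ContinuousLinearMap

open scoped InnerProductSpace

variable {𝕜 E ι : Type*} [RCLike 𝕜] [NormedAddCommGroup E] [InnerProductSpace 𝕜 E] [CompleteSpace E]
  [Fintype ι] {T : ι → E →L[𝕜] E}

theorem sum_norm_apply_sq_of_sum_star_mul_self_eq_one (hT : ∑ k, star (T k) * T k = 1) (x : E) :
    ∑ k, ‖T k x‖ ^ 2 = ‖x‖ ^ 2 := by
  have := congr_arg (fun S : E →L[𝕜] E => RCLike.re ⟪S x, x⟫_𝕜) hT
  simpa [apply_norm_sq_eq_inner_adjoint_left, star_eq_adjoint, sum_inner, ← inner_self_eq_norm_sq]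
    using this

theorem norm_sum_star_mul_mul_le (hT : ∑ k, star (T k) * T k = 1) (S : E →L[𝕜] E) :
    ‖∑ k, star (T k) * S * T k‖ ≤ ‖S‖ := by
  refine opNorm_le_of_re_inner_le (norm_nonneg S) fun x y hx hy => ?_
  have hinner : ⟪(∑ k, star (T k) * S * T k) x, y⟫_𝕜 = ∑ k, ⟪S (T k x), T k y⟫_𝕜 := by
    simp [sum_inner, star_eq_adjoint, adjoint_inner_left]
  calc RCLike.re ⟪(∑ k, star (T k) * S * T k) x, y⟫_𝕜
      ≤ ‖∑ k, ⟪S (T k x), T k y⟫_𝕜‖ := hinner ▸ RCLike.re_le_norm _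
    _ ≤ ∑ k, ‖S‖ * (‖T k x‖ * ‖T k y‖) := by
      refine (norm_sum_le _ _).trans (Finset.sum_le_sum fun k _ => ?_)
      rw [← mul_assoc]
      exact (norm_inner_le_norm _ _).trans (by gcongr; exact le_opNorm _ _)
    _ ≤ ‖S‖ * (√(∑ k, ‖T k x‖ ^ 2) * √(∑ k, ‖T k y‖ ^ 2)) := by
      rw [← Finset.mul_sum]
      gcongr
      exact Real.sum_mul_le_sqrt_mul_sqrt _ _ _
    _ = ‖S‖ := by
      simp [sum_norm_apply_sq_of_sum_star_mul_self_eq_one hT, hx, hy]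

end ContinuousLinearMap

namespace Matrix

open scoped InnerProductSpace

variable {𝕜 n : Type*} [RCLike 𝕜] [Fintype n]

theorem sum_trace_mul_conjTranspose_mul {ι : Type*} [Fintype ι] (E : ι → Matrix n n 𝕜)
    (X ρ Y O : Matrix n n 𝕜) :
    ∑ k, (E k * X * ρ * Y * (E k)ᴴ * O).trace =
      (ρ * (Y * (∑ k, (E k)ᴴ * O * E k) * X)).trace := by
  simp only [Finset.mul_sum, Finset.sum_mul, trace_sum]
  refine Finset.sum_congr rfl fun k _ => ?_
  rw [show E k * X * ρ * Y * (E k)ᴴ * O = (E k * X) * (ρ * Y * (E k)ᴴ * O) by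
    simp only [mul_assoc], trace_mul_comm]
  simp only [mul_assoc]

variable [DecidableEq n]

theorem norm_apply_le_l2_opNorm (M : Matrix n n 𝕜) (i j : n) : ‖M i j‖ ≤ ‖M‖ := by
  set e : n → EuclideanSpace 𝕜 n := fun i => EuclideanSpace.single i 1
  have hM : M i j = ⟪e i, toEuclideanCLM (n := n) (𝕜 := 𝕜) M (e j)⟫_𝕜 := by
    simp [e, EuclideanSpace.inner_single_left, mulVec_single]
  calc ‖M i j‖ ≤ ‖e i‖ * (‖M‖ * ‖e j‖) :=
        hM ▸ (norm_inner_le_norm _ _).trans (by gcongr; exact ContinuousLinearMap.le_opNorm _ _)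
    _ = ‖M‖ := by simp [e]

theorem PosSemidef.norm_trace_mul_le {A : Matrix n n 𝕜} (hA : A.PosSemidef) (C : Matrix n n 𝕜) :
    ‖(A * C).trace‖ ≤ ‖A.trace‖ * ‖C‖ := by
  set U : Matrix n n 𝕜 := (hA.1.eigenvectorUnitary : Matrix n n 𝕜)
  have hU : U ∈ unitary (Matrix n n 𝕜) := hA.1.eigenvectorUnitary.2
  have htrace : (A * C).trace = ∑ i, (hA.1.eigenvalues i : 𝕜) * (star U * C * U) i i := by
    conv_lhs => rw [hA.1.spectral_theorem]
    rw [Unitary.conjStarAlgAut_apply, mul_assoc, mul_assoc, trace_mul_comm, ← mul_assoc,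
      mul_assoc _ _ U]
    simp only [trace, diag_apply, diagonal_mul, Function.comp_apply, U, mul_assoc]
  have hnorm : ‖A.trace‖ = ∑ i, hA.1.eigenvalues i := by
    rw [hA.1.trace_eq_sum_eigenvalues, ← RCLike.ofReal_sum, RCLike.norm_ofReal,
      abs_of_nonneg (Finset.sum_nonneg fun i _ => hA.eigenvalues_nonneg i)]
  rw [htrace, hnorm, Finset.sum_mul]
  refine (norm_sum_le _ _).trans (Finset.sum_le_sum fun i _ => ?_)
  rw [norm_mul, RCLike.norm_ofReal, abs_of_nonneg (hA.eigenvalues_nonneg i)]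
  refine mul_le_mul_of_nonneg_left ?_ (hA.eigenvalues_nonneg i)
  calc ‖(star U * C * U) i i‖ ≤ ‖star U * C * U‖ := norm_apply_le_l2_opNorm _ i i
    _ = ‖C‖ := by
      rw [CStarRing.norm_mul_mem_unitary _ hU,
        CStarRing.norm_mem_unitary_mul _ (Unitary.star_mem hU)]

theorem l2_opNorm_le_one_of_mem_unitary {U : Matrix n n 𝕜} (hU : U ∈ unitary (Matrix n n 𝕜)) :
    ‖U‖ ≤ 1 := by
  rw [← mul_one U, CStarRing.norm_mem_unitary_mul _ hU, cstar_norm_def, map_one]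
  exact ContinuousLinearMap.norm_id_le

theorem IsHermitian.mem_unitary_of_sq_eq_one {h : Matrix n n 𝕜} (hh : h.IsHermitian)
    (h2 : h ^ 2 = 1) : h ∈ unitary (Matrix n n 𝕜) := by
  simp [Unitary.mem_iff, star_eq_conjTranspose, hh.eq, ← sq, h2]

theorem norm_sum_conjTranspose_mul_mul_le {ι : Type*} [Fintype ι] {E : ι → Matrix n n 𝕜}
    (hE : ∑ k, (E k)ᴴ * E k = 1) (O : Matrix n n 𝕜) :
    ‖∑ k, (E k)ᴴ * O * E k‖ ≤ ‖O‖ := by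
  set Φ := toEuclideanCLM (n := n) (𝕜 := 𝕜)
  have hT : ∑ k, star (Φ (E k)) * Φ (E k) = 1 := by
    simpa only [map_sum, map_mul, ← star_eq_conjTranspose, map_star, map_one] using congr_arg Φ hE
  rw [cstar_norm_def, cstar_norm_def O, map_sum]
  simpa only [map_mul, ← star_eq_conjTranspose, map_star] using
    ContinuousLinearMap.norm_sum_star_mul_mul_le hT (Φ O)

end Matrix

theorem norm_mul_sub_mul_le {R : Type*} [NonUnitalNormedRing R] (a b : R) :
    ‖a * b - b * a‖ ≤ 2 * ‖a‖ * ‖b‖ :=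
  calc ‖a * b - b * a‖ ≤ ‖a‖ * ‖b‖ + ‖b‖ * ‖a‖ :=
        (norm_sub_le _ _).trans (add_le_add (norm_mul_le _ _) (norm_mul_le _ _))
    _ = 2 * ‖a‖ * ‖b‖ := by ring

theorem hasDerivAt_exp_smul_mul_mul_exp_smul_neg {𝕂 𝔸 : Type*} [RCLike 𝕂] [NormedRing 𝔸]
    [NormedAlgebra 𝕂 𝔸] [CompleteSpace 𝔸] (A M : 𝔸) (t : 𝕂) :
    HasDerivAt (fun t : 𝕂 => NormedSpace.exp (t • A) * M * NormedSpace.exp (t • -A))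
      (NormedSpace.exp (t • A) * (A * M - M * A) * NormedSpace.exp (t • -A)) t := by
  refine (((hasDerivAt_exp_smul_const A t).mul_const M).mul
    (hasDerivAt_exp_smul_const' (-A) t)).congr_deriv ?_
  noncomm_ring

theorem HasDerivAt.matrix_trace {n : Type*} [Fintype n] [DecidableEq n] {F : ℝ → Matrix n n ℂ}
    {F' : Matrix n n ℂ} {t : ℝ} (hF : HasDerivAt F F' t) :
    HasDerivAt (fun t => (F t).trace) F'.trace t := by
  let φ : Matrix n n ℂ →L[ℝ] ℂ := ((traceLinearMap n ℂ ℂ).restrictScalars ℝ).toContinuousLinearMap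
  exact φ.hasFDerivAt.comp_hasDerivAt t hF

theorem response_lipschitz_bound_general
    (d n r : ℕ) (h : Fin n → Matrix (Fin d) (Fin d) ℂ)
    (hherm : ∀ j, (h j).IsHermitian)
    (hinv : ∀ j, h j ^ 2 = 1)
    (H : Matrix (Fin d) (Fin d) ℂ) (hH : H = ∑ j, h j)
    (ρ : Matrix (Fin d) (Fin d) ℂ) (hρ : ρ.PosSemidef) (hρtr : ρ.trace = 1)
    (E : Fin r → Matrix (Fin d) (Fin d) ℂ)
    (hE : ∑ k, (E k)ᴴ * E k = 1)
    (O : Matrix (Fin d) (Fin d) ℂ) (hOnorm : ‖O‖ ≤ 1)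
    (R : ℝ → ℂ)
    (hR : ∀ θ : ℝ, R θ = ∑ k,
      (E k * NormedSpace.exp ((-(Complex.I * (θ : ℂ))) • H) * ρ *
        NormedSpace.exp ((Complex.I * (θ : ℂ)) • H) * (E k)ᴴ * O).trace) :
    Differentiable ℝ R ∧ ∀ θ : ℝ, ‖deriv R θ‖ ≤ 2 * n := by
  set A := Complex.I • H
  set M := ∑ k, (E k)ᴴ * O * E k
  have hsmul (θ : ℝ) : (Complex.I * θ) • H = θ • A := by
    rw [mul_comm, mul_smul, Complex.coe_smul]
  have hR' : R = fun θ : ℝ =>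
      (ρ * (NormedSpace.exp (θ • A) * M * NormedSpace.exp (θ • -A))).trace := by
    funext θ
    rw [hR, sum_trace_mul_conjTranspose_mul, neg_smul, hsmul, ← smul_neg]
  have hderiv (θ : ℝ) : HasDerivAt R (ρ * (NormedSpace.exp (θ • A) * (A * M - M * A) *
      NormedSpace.exp (θ • -A))).trace θ :=
    hR' ▸ ((hasDerivAt_exp_smul_mul_mul_exp_smul_neg A M θ).const_mul ρ).matrix_trace
  have hHerm : H.IsHermitian := hH ▸ isSelfAdjoint_sum _ fun j _ => hherm j
  have hU (t : ℝ) : NormedSpace.exp (t • A) ∈ unitary (Matrix (Fin d) (Fin d) ℂ) := by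
    rw [smul_comm]
    exact (selfAdjoint.expUnitary ⟨t • H, (IsSelfAdjoint.all t).smul hHerm.isSelfAdjoint⟩).2
  have hA : ‖A‖ ≤ n := by
    rw [norm_smul, Complex.norm_I, one_mul, hH]
    refine (norm_sum_le _ _).trans ?_
    simpa using Finset.sum_le_card_nsmul Finset.univ _ 1 fun j _ =>
      l2_opNorm_le_one_of_mem_unitary ((hherm j).mem_unitary_of_sq_eq_one (hinv j))
  have hM : ‖M‖ ≤ 1 := (norm_sum_conjTranspose_mul_mul_le hE O).trans hOnorm
  refine ⟨fun θ => (hderiv θ).differentiableAt, fun θ => ?_⟩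
  rw [(hderiv θ).deriv]
  calc _ ≤ ‖ρ.trace‖ * ‖NormedSpace.exp (θ • A) * (A * M - M * A) * NormedSpace.exp (θ • -A)‖ :=
        hρ.norm_trace_mul_le _
    _ = ‖A * M - M * A‖ := by
      rw [hρtr, norm_one, one_mul, smul_neg, ← neg_smul,
        CStarRing.norm_mul_mem_unitary _ (hU _), CStarRing.norm_mem_unitary_mul _ (hU _)]
    _ ≤ 2 * ‖A‖ * ‖M‖ := norm_mul_sub_mul_le A M
    _ ≤ 2 * n * 1 := by gcongr
    _ = 2 * n := mul_one _

/-- Lipschitz bound for noisy response functions: if the encoding Hamiltonian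
`H = Σ_j h_j` is a sum of `n` commuting Hermitian involutions, `ρ` is a density matrix,
`E_k` are Kraus operators of a channel, and `O` is a Hermitian observable with
operator norm at most `1`, then the response
`R(θ) = Σ_k Tr[E_k exp(−iθH) ρ exp(iθH) E_kᴴ O]` is differentiable with
`|R′(θ)| ≤ 2n` for all `θ`. -/
theorem response_lipschitz_bound
    (d n r : ℕ) (h : Fin n → Matrix (Fin d) (Fin d) ℂ)
    (hherm : ∀ j, (h j).IsHermitian)
    (hcomm : ∀ j j', Commute (h j) (h j'))
    (hinv : ∀ j, h j ^ 2 = 1)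
    (H : Matrix (Fin d) (Fin d) ℂ) (hH : H = ∑ j, h j)
    (ρ : Matrix (Fin d) (Fin d) ℂ) (hρ : ρ.PosSemidef) (hρtr : ρ.trace = 1)
    (E : Fin r → Matrix (Fin d) (Fin d) ℂ)
    (hE : ∑ k, (E k)ᴴ * E k = 1)
    (O : Matrix (Fin d) (Fin d) ℂ) (hO : O.IsHermitian) (hOnorm : ‖O‖ ≤ 1)
    (R : ℝ → ℂ)
    (hR : ∀ θ : ℝ, R θ = ∑ k,
      (E k * NormedSpace.exp ((-(Complex.I * (θ : ℂ))) • H) * ρ *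
        NormedSpace.exp ((Complex.I * (θ : ℂ)) • H) * (E k)ᴴ * O).trace) :
    Differentiable ℝ R ∧ ∀ θ : ℝ, ‖deriv R θ‖ ≤ 2 * n :=
  response_lipschitz_bound_general d n r h hherm hinv H hH ρ hρ hρtr E hE O hOnorm R hR
end

section
/- Let h be a d×d complex matrix with h² = 1 and let M be any d×d complex matrix. Then the commutator satisfies the parameter-shift identity [h, M] = −i·( exp(iπh/4) · M · exp(−iπh/4) − exp(−iπh/4) · M · exp(iπh/4) ). -/
/-!
For an involution `h` the exponential series splits into its even and odd parts, so
`exp (z • h) = cosh z • 1 + sinh z • h`. Conjugating `M` by `exp (± θ • h)` and subtracting, the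
`cosh² θ` and `sinh² θ` terms cancel and only `2 sinh θ cosh θ • [h, M] = sinh (2θ) • [h, M]`
survives; at `θ = iπ/4` the coefficient is `sinh (iπ/2) = i`.
-/

open Complex

theorem NormedSpace.exp_smul_of_sq_eq_one {A : Type*} [Ring A] [Algebra ℂ A] [TopologicalSpace A]
    [IsTopologicalRing A] [ContinuousSMul ℂ A] [T2Space A] {h : A} (hsq : h ^ 2 = 1) (z : ℂ) :
    NormedSpace.exp (z • h) = cosh z • 1 + sinh z • h := by
  rw [NormedSpace.exp_eq_tsum ℂ]
  refine HasSum.tsum_eq (HasSum.even_add_odd ?_ ?_)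
  · convert (hasSum_cosh z).smul_const (1 : A) using 2 with n
    rw [smul_pow, pow_mul h, hsq, one_pow, smul_smul, div_eq_mul_inv, mul_comm]
  · convert (hasSum_sinh z).smul_const h using 2 with n
    rw [smul_pow, pow_succ h, pow_mul h, hsq, one_pow, one_mul, smul_smul, div_eq_mul_inv,
      mul_comm]

theorem conj_sub_conj_eq_smul_commutator {R A : Type*} [CommRing R] [Ring A] [Algebra R A]
    (a b : R) (h m : A) :
    (a • 1 + b • h) * m * (a • 1 - b • h) - (a • 1 - b • h) * m * (a • 1 + b • h) =
      (2 * a * b) • (h * m - m * h) := by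
  simp only [add_mul, sub_mul, mul_add, mul_sub, smul_mul_assoc, mul_smul_comm, one_mul, mul_one]
  module

theorem Complex.two_mul_sinh_mul_cosh_I_mul_pi_div_four :
    2 * cosh (I * (Real.pi / 4 : ℝ)) * sinh (I * (Real.pi / 4 : ℝ)) = I := by
  rw [mul_right_comm, ← sinh_two_mul]
  have : 2 * (I * (Real.pi / 4 : ℝ)) = (Real.pi / 2 : ℝ) * I := by push_cast; ring
  rw [this, sinh_mul_I, ← ofReal_sin, Real.sin_pi_div_two, ofReal_one, one_mul]

/-- Parameter-shift commutator identity for involutory operators: if `h² = 1` then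
`[h, M] = −i (exp(iπh/4) M exp(−iπh/4) − exp(−iπh/4) M exp(iπh/4))`. -/
theorem commutator_parameter_shift
    (d : ℕ) (h M : Matrix (Fin d) (Fin d) ℂ) (hinv : h ^ 2 = 1) :
    h * M - M * h =
      (-Complex.I) •
        (NormedSpace.exp ((Complex.I * (Real.pi / 4 : ℝ)) • h) * M *
            NormedSpace.exp ((-(Complex.I * (Real.pi / 4 : ℝ))) • h) -
          NormedSpace.exp ((-(Complex.I * (Real.pi / 4 : ℝ))) • h) * M *
            NormedSpace.exp ((Complex.I * (Real.pi / 4 : ℝ)) • h)) := by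
  set θ : ℂ := I * (Real.pi / 4 : ℝ)
  have exp_neg : NormedSpace.exp ((-θ) • h) = cosh θ • 1 - sinh θ • h := by
    rw [NormedSpace.exp_smul_of_sq_eq_one hinv, cosh_neg, sinh_neg, neg_smul, sub_eq_add_neg]
  rw [NormedSpace.exp_smul_of_sq_eq_one hinv, exp_neg, conj_sub_conj_eq_smul_commutator,
    two_mul_sinh_mul_cosh_I_mul_pi_div_four, smul_smul, neg_mul, I_mul_I, neg_neg, one_smul]
end

section
/- Let 0 < x_0 < x_1 < … < x_m be distinct positive reals, let γ_j = Π_{l ≠ j} (0 − x_l)/(x_j − x_l) be the Lagrange basis coefficients at zero, let λ > 0, and let a : ℕ → ℝ be a sequence such that Σ_{k=0}^∞ |a_k| (x_m λ)^k < ∞. Define f(y) = Σ_{k=0}^∞ a_k y^k for |y| ≤ x_m λ. Then Σ_{j=0}^m γ_j · f(x_j λ) = a_0 + Σ_{k=m+1}^∞ a_k λ^k (Σ_{j=0}^m γ_j x_j^k), where the series on the right converges absolutely. -/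
open Finset Polynomial

lemma lagrange_zero_pow (m : ℕ) (x : Fin (m + 1) → ℝ) (hxinj : Function.Injective x)
    (γ : Fin (m + 1) → ℝ)
    (hγ : ∀ j, γ j = ∏ l ∈ Finset.univ.erase j, (0 - x l) / (x j - x l))
    (k : ℕ) (hk : k ≤ m) : ∑ j, γ j * x j ^ k = (0 : ℝ) ^ k := by
  have hvs : Set.InjOn x (Finset.univ : Finset (Fin (m + 1))) := hxinj.injOn
  have hdeg : (X ^ k : ℝ[X]).degree < #(Finset.univ : Finset (Fin (m + 1))) := by
    rw [degree_X_pow, Finset.card_univ, Fintype.card_fin]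
    exact_mod_cast Nat.lt_succ_of_le hk
  have heq := Lagrange.eq_interpolate (f := (X ^ k : ℝ[X])) hvs hdeg
  have h0 := congrArg (Polynomial.eval 0) heq
  rw [Lagrange.interpolate_apply] at h0
  simp only [eval_pow, eval_X, eval_finset_sum, eval_mul, eval_C] at h0
  have hbasis : ∀ j, Polynomial.eval 0 (Lagrange.basis Finset.univ x j) = γ j := by
    intro j
    rw [Lagrange.basis, eval_prod, hγ j]
    refine Finset.prod_congr rfl fun l _ => ?_
    rw [Lagrange.basisDivisor]
    simp [div_eq_inv_mul, mul_comm]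
  rw [h0]
  refine Finset.sum_congr rfl fun j _ => ?_
  rw [hbasis j, mul_comm]

/-- Exact remainder formula for Richardson extrapolation: with positive increasing
nodes `x_0 < … < x_m`, Lagrange coefficients `γ_j` at zero, and a response
`f(y) = Σ_k a_k y^k` absolutely convergent up to `x_m λ`, the extrapolated value
`Σ_j γ_j f(x_j λ)` equals `a_0 + Σ_{k=m+1}^∞ a_k λ^k (Σ_j γ_j x_j^k)`, the
right-hand series converging absolutely. -/
theorem richardson_remainder
    (m : ℕ) (x : Fin (m + 1) → ℝ) (hx0 : 0 < x 0) (hxmono : StrictMono x)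
    (γ : Fin (m + 1) → ℝ)
    (hγ : ∀ j, γ j = ∏ l ∈ Finset.univ.erase j, (0 - x l) / (x j - x l))
    (lam : ℝ) (hlam : 0 < lam)
    (a : ℕ → ℝ)
    (hsum : Summable fun k : ℕ => |a k| * (x (Fin.last m) * lam) ^ k)
    (f : ℝ → ℝ)
    (hf : ∀ y : ℝ, |y| ≤ x (Fin.last m) * lam → f y = ∑' k : ℕ, a k * y ^ k) :
    (Summable fun k : ℕ =>
        |a (k + (m + 1)) * lam ^ (k + (m + 1)) * ∑ j, γ j * x j ^ (k + (m + 1))|) ∧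
      ∑ j, γ j * f (x j * lam) =
        a 0 + ∑' k : ℕ,
          a (k + (m + 1)) * lam ^ (k + (m + 1)) * ∑ j, γ j * x j ^ (k + (m + 1)) := by
  have hxpos : ∀ j, 0 < x j := fun j => lt_of_lt_of_le hx0 (hxmono.monotone (Fin.zero_le j))
  have hxle : ∀ j, x j ≤ x (Fin.last m) := fun j => hxmono.monotone (Fin.le_last j)
  have hylam : ∀ j, 0 ≤ x j * lam := fun j => mul_nonneg (hxpos j).le hlam.le
  have hyle : ∀ j, x j * lam ≤ x (Fin.last m) * lam := fun j =>
    mul_le_mul_of_nonneg_right (hxle j) hlam.le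
  -- bound for each j
  have hsumj : ∀ j, Summable fun k : ℕ => a k * (x j * lam) ^ k := by
    intro j
    refine (hsum.of_nonneg_of_le (fun k => abs_nonneg _) ?_).of_abs
    intro k
    rw [abs_mul, abs_pow]
    refine mul_le_mul_of_nonneg_left ?_ (abs_nonneg _)
    exact pow_le_pow_left₀ (abs_nonneg _) (by rw [abs_of_nonneg (hylam j)]; exact hyle j) k
  -- summability of g k := Σ_j γ j * (a k * (x j λ)^k)
  set g : ℕ → ℝ := fun k => ∑ j, γ j * (a k * (x j * lam) ^ k) with hg
  have hsumg : Summable g := by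
    refine Summable.of_abs ?_
    have hC : Summable fun k : ℕ => (∑ j, |γ j|) * (|a k| * (x (Fin.last m) * lam) ^ k) :=
      hsum.mul_left _
    refine hC.of_nonneg_of_le (fun k => abs_nonneg _) (fun k => ?_)
    calc |g k| ≤ ∑ j, |γ j * (a k * (x j * lam) ^ k)| := Finset.abs_sum_le_sum_abs _ _
      _ ≤ ∑ j, |γ j| * (|a k| * (x (Fin.last m) * lam) ^ k) := by
          refine Finset.sum_le_sum fun j _ => ?_
          rw [abs_mul, abs_mul, abs_pow, abs_of_nonneg (hylam j)]
          refine mul_le_mul_of_nonneg_left ?_ (abs_nonneg _)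
          exact mul_le_mul_of_nonneg_left
            (pow_le_pow_left₀ (hylam j) (hyle j) k) (abs_nonneg _)
      _ = (∑ j, |γ j|) * (|a k| * (x (Fin.last m) * lam) ^ k) := by
          rw [Finset.sum_mul]
  -- swap sum and tsum
  have hswap : ∑ j, γ j * f (x j * lam) = ∑' k, g k := by
    have : ∀ j : Fin (m + 1), γ j * f (x j * lam) = ∑' k, γ j * (a k * (x j * lam) ^ k) := by
      intro j
      rw [hf _ (by rw [abs_of_nonneg (hylam j)]; exact hyle j), ← tsum_mul_left]
    simp_rw [this]
    exact (Summable.tsum_finsetSum (fun j _ => (hsumj j).mul_left (γ j))).symm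
  -- rewrite g k
  have hgk : ∀ k, g k = a k * lam ^ k * ∑ j, γ j * x j ^ k := by
    intro k
    rw [hg, Finset.mul_sum]
    refine Finset.sum_congr rfl fun j _ => ?_
    rw [mul_pow]
    ring
  -- g k = 0 for 1 ≤ k ≤ m, g 0 = a 0
  have hlag := lagrange_zero_pow m x hxmono.injective γ hγ
  have hg0 : g 0 = a 0 := by
    rw [hgk 0, hlag 0 (Nat.zero_le m)]; simp
  have hgz : ∀ k, 1 ≤ k → k ≤ m → g k = 0 := by
    intro k hk1 hkm
    rw [hgk k, hlag k hkm, zero_pow (by omega), mul_zero]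
  constructor
  · have := (hsumg.comp_injective (add_left_injective (m + 1))).abs
    simpa [hgk] using this
  · rw [hswap, ← Summable.sum_add_tsum_nat_add (m + 1) hsumg]
    have hfin : ∑ i ∈ Finset.range (m + 1), g i = a 0 := by
      rw [Finset.sum_eq_single 0]
      · exact hg0
      · intro k hk hk0
        exact hgz k (Nat.one_le_iff_ne_zero.mpr hk0) (Nat.lt_succ_iff.mp (Finset.mem_range.mp hk))
      · simp
    rw [hfin]
    congr 1
    exact tsum_congr fun k => hgk (k + (m + 1))
end

section
/- Let 0 < x_0 < x_1 < … < x_m be distinct positive reals, let γ_j = Π_{l ≠ j} (0 − x_l)/(x_j − x_l), let λ₀ > 0, and let a : ℕ → ℝ satisfy Σ_{k=0}^∞ |a_k| r^k < ∞ for some r > x_m λ₀. Define f(y) = Σ_{k=0}^∞ a_k y^k. Then there exists a constant C ≥ 0 such that for every λ ∈ [0, λ₀], |Σ_{j=0}^m γ_j · f(x_j λ) − a_0| ≤ C · λ^{m+1}. -/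
/-!
The weights `γ j` are the values at `0` of the Lagrange basis polynomials of the nodes `x j`, so
`∑ j, γ j * p (x j * λ) = p 0` for every polynomial `p` of degree at most `m`. Applied to the
Taylor polynomial of degree `m` of `f`, this writes the bias as `∑ j, γ j` times the Taylor
remainders at `x j * λ ≤ r`, and each remainder is at most
`(x j * λ / r) ^ (m + 1) * ∑ |a k| r ^ k`.
-/

open Finset Polynomial

theorem sum_lagrange_weight_mul_pow {F ι : Type*} [Field F] [Fintype ι] [DecidableEq ι]
    {x : ι → F} (hx : Function.Injective x) (t : F) {k : ℕ} (hk : k < Fintype.card ι) :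
    ∑ j, (∏ l ∈ univ.erase j, (t - x l) / (x j - x l)) * x j ^ k = t ^ k := by
  have hdeg : (X ^ k : F[X]).degree < #(univ : Finset ι) := by
    rw [degree_X_pow, card_univ]; exact_mod_cast hk
  have h := congrArg (eval t) (Lagrange.eq_interpolate hx.injOn hdeg)
  rw [Lagrange.interpolate_apply, eval_finsetSum, eval_pow, eval_X] at h
  rw [h]
  refine sum_congr rfl fun j _ => ?_
  simp only [eval_mul, eval_C, eval_pow, eval_X, Lagrange.basis, eval_prod,
    Lagrange.basisDivisor]
  rw [mul_comm]
  congr 1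
  refine prod_congr rfl fun l _ => ?_
  simp [div_eq_inv_mul]

theorem sum_lagrange_weight_mul_sum_range {F ι : Type*} [Field F] [Fintype ι] [DecidableEq ι]
    {x : ι → F} (hx : Function.Injective x) (t : F) (b : ℕ → F) {n : ℕ}
    (hn : n ≤ Fintype.card ι) :
    ∑ j, (∏ l ∈ univ.erase j, (t - x l) / (x j - x l)) * ∑ k ∈ range n, b k * x j ^ k =
      ∑ k ∈ range n, b k * t ^ k := by
  simp_rw [mul_sum, sum_comm (s := univ), mul_left_comm _ (b _), ← mul_sum]
  exact sum_congr rfl fun k hk =>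
    by rw [sum_lagrange_weight_mul_pow hx t ((mem_range.1 hk).trans_le hn)]

theorem abs_tsum_sub_sum_range_le {c : ℕ → ℝ} {R y : ℝ}
    (hc : Summable fun k => |c k| * R ^ k) (hR : 0 < R) (hy : |y| ≤ R) (n : ℕ) :
    |∑' k, c k * y ^ k - ∑ k ∈ range n, c k * y ^ k| ≤
      |y| ^ n * (∑' k, |c k| * R ^ k) / R ^ n := by
  have hterm : ∀ k, |c k * y ^ k| ≤ |c k| * R ^ k := fun k => by
    rw [abs_mul, abs_pow]; gcongr
  have hsum_abs : Summable fun k => |c k * y ^ k| :=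
    hc.of_nonneg_of_le (fun _ => abs_nonneg _) hterm
  have hshift : ∀ i, R ^ n * |c (i + n) * y ^ (i + n)| ≤
      |y| ^ n * (|c (i + n)| * R ^ (i + n)) := fun i =>
    calc R ^ n * |c (i + n) * y ^ (i + n)| = |y| ^ n * (|c (i + n)| * (|y| ^ i * R ^ n)) := by
          rw [abs_mul, abs_pow, pow_add]; ring
      _ ≤ |y| ^ n * (|c (i + n)| * R ^ (i + n)) := by rw [pow_add]; gcongr
  have htail_abs : Summable fun i => |c (i + n) * y ^ (i + n)| :=
    (summable_nat_add_iff n).2 hsum_abs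
  have htail : Summable fun i => |c (i + n)| * R ^ (i + n) := (summable_nat_add_iff n).2 hc
  rw [le_div_iff₀ (by positivity), mul_comm, ← hsum_abs.of_abs.sum_add_tsum_nat_add n,
    add_sub_cancel_left]
  calc R ^ n * |∑' i, c (i + n) * y ^ (i + n)|
      ≤ ∑' i, R ^ n * |c (i + n) * y ^ (i + n)| := by
        rw [tsum_mul_left]; gcongr
        have := norm_tsum_le_tsum_norm (f := fun i => c (i + n) * y ^ (i + n)) htail_abs
        simpa only [Real.norm_eq_abs] using this
    _ ≤ ∑' i, |y| ^ n * (|c (i + n)| * R ^ (i + n)) :=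
        Summable.tsum_le_tsum hshift (htail_abs.mul_left _) (htail.mul_left _)
    _ ≤ |y| ^ n * ∑' k, |c k| * R ^ k := by
        rw [tsum_mul_left]
        exact mul_le_mul_of_nonneg_left
          (tsum_comp_le_tsum_of_inj hc (fun k => by positivity) (add_left_injective n))
          (by positivity)

/-- Richardson extrapolation bias bound `R_M = R + O(λ^{m+1})`: with positive
increasing nodes `x_0 < … < x_m`, Lagrange coefficients `γ_j` at zero, and a response
`f(y) = Σ_k a_k y^k` absolutely convergent on a radius `r > x_m λ₀`, there is a
constant `C ≥ 0` such that `|Σ_j γ_j f(x_j λ) − a_0| ≤ C λ^{m+1}` for all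
`λ ∈ [0, λ₀]`. -/
theorem richardson_bias_bound
    (m : ℕ) (x : Fin (m + 1) → ℝ) (hx0 : 0 < x 0) (hxmono : StrictMono x)
    (γ : Fin (m + 1) → ℝ)
    (hγ : ∀ j, γ j = ∏ l ∈ Finset.univ.erase j, (0 - x l) / (x j - x l))
    (lam₀ : ℝ) (hlam₀ : 0 < lam₀)
    (a : ℕ → ℝ) (r : ℝ) (hr : x (Fin.last m) * lam₀ < r)
    (hsum : Summable fun k : ℕ => |a k| * r ^ k)
    (f : ℝ → ℝ) (hf : ∀ y : ℝ, f y = ∑' k : ℕ, a k * y ^ k) :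
    ∃ C : ℝ, 0 ≤ C ∧ ∀ lam : ℝ, lam ∈ Set.Icc (0 : ℝ) lam₀ →
      |(∑ j, γ j * f (x j * lam)) - a 0| ≤ C * lam ^ (m + 1) := by
  have hx_pos : ∀ j, 0 < x j := fun j => hx0.trans_le (hxmono.monotone (Fin.zero_le j))
  have hr_pos : 0 < r := (mul_pos (hx_pos _) hlam₀).trans hr
  set S := ∑' k, |a k| * r ^ k
  set P : ℝ → ℝ := fun y => ∑ k ∈ range (m + 1), a k * y ^ k
  refine ⟨(∑ j, |γ j| * |x j| ^ (m + 1)) * S / r ^ (m + 1), by positivity, ?_⟩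
  rintro lam ⟨hlam_nonneg, hlam_le⟩
  have hexact : ∑ j, γ j * P (x j * lam) = a 0 := by
    simp_rw [P, hγ, mul_pow, mul_comm _ (lam ^ _), ← mul_assoc]
    rw [sum_lagrange_weight_mul_sum_range hxmono.injective 0 _ (by simp)]
    simp [sum_range_succ']
  have hnode : ∀ j, |x j * lam| ≤ r := fun j => by
    rw [abs_of_nonneg (mul_nonneg (hx_pos j).le hlam_nonneg)]
    exact (mul_le_mul (hxmono.monotone (Fin.le_last j)) hlam_le hlam_nonneg
      (hx_pos _).le).trans hr.le
  calc |∑ j, γ j * f (x j * lam) - a 0|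
      = |∑ j, γ j * (f (x j * lam) - P (x j * lam))| := by
        rw [← hexact, ← sum_sub_distrib]; simp only [mul_sub]
    _ ≤ ∑ j, |γ j| * |f (x j * lam) - P (x j * lam)| := by
        simpa only [abs_mul] using
          abs_sum_le_sum_abs (fun j => γ j * (f (x j * lam) - P (x j * lam))) univ
    _ ≤ ∑ j, |γ j| * (|x j * lam| ^ (m + 1) * S / r ^ (m + 1)) := by
        gcongr with j
        rw [hf]
        exact abs_tsum_sub_sum_range_le hsum hr_pos (hnode j) (m + 1)
    _ = (∑ j, |γ j| * |x j| ^ (m + 1)) * S / r ^ (m + 1) * lam ^ (m + 1) := by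
        rw [sum_mul, sum_div, sum_mul]
        refine sum_congr rfl fun j _ => ?_
        rw [abs_mul, abs_of_nonneg hlam_nonneg]
        ring
end
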